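/- arXiv:1805.02503 — 4 statements merged into one kernel-verified Lean document; each statement's English description precedes it below -/
import Mathlib

section
/- Let σ : ℕ → ℝ be a function with σ(n) > 0 for all n, σ(0) = 1, and such that the sequence n ↦ σ(n+1)/σ(n) is decreasing (non-increasing). Then for all m, n ∈ ℕ, σ(m+n)/(σ(m)σ(n)) ≤ σ(2m)/σ(m)² + σ(2n)/σ(n)². -/
/-!
A positive sequence with non-increasing ratios σ(n+1)/σ(n) is log-concave, so for every shift k the
ratio σ(a+k)/σ(a) is non-increasing in a. For m ≤ n this gives σ(n+m)/σ(n) ≤ σ(m+m)/σ(m), i.e. the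
left-hand side is bounded by the term σ(2m)/σ(m)² alone; the other term is positive.
-/

section RatioAntitone

variable {K : Type*} [Field K] [LinearOrder K] [IsStrictOrderedRing K]
  {σ : ℕ → K} (hpos : ∀ n, 0 < σ n) (hσ : Antitone fun n => σ (n + 1) / σ n)
include hpos hσ

theorem antitone_div_add_of_antitone_div_succ (k : ℕ) : Antitone fun n => σ (n + k) / σ n := by
  induction k with
  | zero => simpa only [add_zero, div_self (hpos _).ne'] using antitone_const
  | succ k ih =>
    intro a b hab
    have hsplit (n : ℕ) : σ (n + (k + 1)) / σ n = σ (n + k + 1) / σ (n + k) * (σ (n + k) / σ n) := by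
      rw [div_mul_div_cancel₀ (hpos _).ne', add_assoc]
    simp only [hsplit]
    exact mul_le_mul (hσ (by omega)) (ih hab) (div_pos (hpos _) (hpos _)).le
      (div_pos (hpos _) (hpos _)).le

theorem div_mul_le_div_sq_of_le {m n : ℕ} (hmn : m ≤ n) :
    σ (m + n) / (σ m * σ n) ≤ σ (2 * m) / σ m ^ 2 := by
  have hshift := antitone_div_add_of_antitone_div_succ hpos hσ m hmn
  rw [div_mul_eq_div_div_swap, add_comm, sq, ← div_div, two_mul]
  exact div_le_div_of_nonneg_right hshift (hpos m).le

end RatioAntitone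

theorem stmt_0_general (σ : ℕ → ℝ) (hpos : ∀ n, 0 < σ n)
    (hdec : ∀ n, σ (n + 2) / σ (n + 1) ≤ σ (n + 1) / σ n) :
    ∀ m n : ℕ, σ (m + n) / (σ m * σ n) ≤ σ (2 * m) / (σ m) ^ 2 + σ (2 * n) / (σ n) ^ 2 := by
  have hσ : Antitone fun n => σ (n + 1) / σ n := antitone_nat_of_succ_le hdec
  have hterm (n : ℕ) : 0 < σ (2 * n) / σ n ^ 2 := div_pos (hpos _) (pow_pos (hpos n) 2)
  intro m n
  rcases le_total m n with hmn | hnm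
  · linarith [div_mul_le_div_sq_of_le hpos hσ hmn, hterm n]
  · have h := div_mul_le_div_sq_of_le hpos hσ hnm
    rw [add_comm n m, mul_comm (σ n)] at h
    linarith [hterm m]

theorem stmt_0 (σ : ℕ → ℝ) (hpos : ∀ n, 0 < σ n) (h0 : σ 0 = 1)
    (hdec : ∀ n, σ (n + 2) / σ (n + 1) ≤ σ (n + 1) / σ n) :
    ∀ m n : ℕ, σ (m + n) / (σ m * σ n) ≤ σ (2 * m) / (σ m) ^ 2 + σ (2 * n) / (σ n) ^ 2 :=
  stmt_0_general σ hpos hdec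
end

section
/- Let ρ : [0,∞) → [0,∞) be an increasing concave function with ρ(0) = 0. Then for all natural numbers m, n, one has ρ(m+n) - ρ(m) - ρ(n) ≤ max(ρ(2m) - 2ρ(m), ρ(2n) - 2ρ(n)), and consequently e^{ρ(m+n) - ρ(m) - ρ(n)} ≤ e^{ρ(2m)-2ρ(m)} + e^{ρ(2n)-2ρ(n)}. -/
/-!
For concave `ρ` the increment `ρ (t + d) - ρ t` is antitone in `t`. If `m ≤ n`, taking `d = m`
at `t = m` and `t = n` gives `ρ (m + n) - ρ n ≤ ρ (2m) - ρ m`, which is the bound by the first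
term of the maximum; the exponential bound follows from `exp (max a b) ≤ exp a + exp b`.
-/

theorem ConcaveOn.map_add_sub_le_map_add_sub {𝕜 : Type*} [Field 𝕜] [LinearOrder 𝕜]
    [IsStrictOrderedRing 𝕜] {s : Set 𝕜} {f : 𝕜 → 𝕜} (hf : ConcaveOn 𝕜 s f) {x y d : 𝕜}
    (hx : x ∈ s) (hyd : y + d ∈ s) (hxy : x ≤ y) (hd : 0 ≤ d) :
    f (y + d) - f y ≤ f (x + d) - f x := by
  rcases hd.eq_or_lt with rfl | hd
  · simp
  have hxd : x + d ∈ s := hf.1.ordConnected.out hx hyd ⟨by linarith, by linarith⟩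
  have hy : y ∈ s := hf.1.ordConnected.out hx hyd ⟨hxy, by linarith⟩
  -- Secant slopes of a concave function decrease in either endpoint.
  have h₁ : slope f x (y + d) ≤ slope f x (x + d) :=
    hf.slope_anti hx ⟨hxd, by simp [hd.ne']⟩ ⟨hyd, by simp; linarith⟩ (by linarith)
  have h₂ : slope f (y + d) y ≤ slope f (y + d) x :=
    hf.slope_anti hyd ⟨hx, by simp; linarith⟩ ⟨hy, by simp [hd.ne']⟩ hxy
  rw [slope_comm f (y + d) x, slope_comm f (y + d) y] at h₂
  have h := h₂.trans h₁
  rw [slope_def_field, slope_def_field, add_sub_cancel_left, add_sub_cancel_left] at h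
  exact (div_le_div_iff_of_pos_right hd).1 h

theorem ConcaveOn.map_add_sub_sub_le_max {ρ : ℝ → ℝ} (hρ : ConcaveOn ℝ (Set.Ici 0) ρ)
    {x y : ℝ} (hx : 0 ≤ x) (hy : 0 ≤ y) :
    ρ (x + y) - ρ x - ρ y ≤ max (ρ (2 * x) - 2 * ρ x) (ρ (2 * y) - 2 * ρ y) := by
  rcases le_total x y with hxy | hyx
  · have h := hρ.map_add_sub_le_map_add_sub hx (by simp; linarith) hxy hx
    rw [add_comm y x, ← two_mul] at h
    exact le_max_of_le_left (by linarith)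
  · have h := hρ.map_add_sub_le_map_add_sub hy (by simp; linarith) hyx hy
    rw [← two_mul] at h
    exact le_max_of_le_right (by linarith)

theorem Real.exp_le_exp_add_exp_of_le_max {x a b : ℝ} (h : x ≤ max a b) :
    Real.exp x ≤ Real.exp a + Real.exp b :=
  calc Real.exp x ≤ Real.exp (max a b) := Real.exp_le_exp.2 h
    _ = max (Real.exp a) (Real.exp b) := Real.exp_monotone.map_max
    _ ≤ Real.exp a + Real.exp b := max_le_add_of_nonneg (Real.exp_nonneg a) (Real.exp_nonneg b)

theorem stmt_3_general (ρ : ℝ → ℝ) (hconc : ConcaveOn ℝ (Set.Ici 0) ρ) :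
    ∀ m n : ℕ,
      ρ (m + n) - ρ m - ρ n ≤ max (ρ (2 * m) - 2 * ρ m) (ρ (2 * n) - 2 * ρ n) ∧
      Real.exp (ρ (m + n) - ρ m - ρ n) ≤
        Real.exp (ρ (2 * m) - 2 * ρ m) + Real.exp (ρ (2 * n) - 2 * ρ n) := by
  intro m n
  have h := hconc.map_add_sub_sub_le_max m.cast_nonneg n.cast_nonneg
  exact ⟨h, Real.exp_le_exp_add_exp_of_le_max h⟩

theorem stmt_3 (ρ : ℝ → ℝ) (hconc : ConcaveOn ℝ (Set.Ici 0) ρ)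
    (hmono : MonotoneOn ρ (Set.Ici 0)) (hnonneg : ∀ x ≥ (0:ℝ), 0 ≤ ρ x) (h0 : ρ 0 = 0) :
    ∀ m n : ℕ,
      ρ (m + n) - ρ m - ρ n ≤ max (ρ (2 * m) - 2 * ρ m) (ρ (2 * n) - 2 * ρ n) ∧
      Real.exp (ρ (m + n) - ρ m - ρ n) ≤
        Real.exp (ρ (2 * m) - 2 * ρ m) + Real.exp (ρ (2 * n) - 2 * ρ n) :=
  stmt_3_general ρ hconc
end

section
/- Let G be a group equipped with a length function τ : G → ℕ satisfying τ(st) ≤ τ(s) + τ(t), τ(s⁻¹) = τ(s), and τ(e) = 0. Let ρ : [0,∞) → [0,∞) be increasing and concave with ρ(0) = 0, and define ω(s) = e^{ρ(τ(s))} and u(s) = e^{ρ(2τ(s)) - 2ρ(τ(s))}. Then for all s, t ∈ G, ω(st)/(ω(s)ω(t)) ≤ u(s) + u(t). -/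
/-! Concavity makes the increments of `ρ` decreasing: for `0 ≤ a ≤ b`,
`ρ (a + b) - ρ b ≤ ρ (2a) - ρ a`. Since `ρ` is monotone and `τ` subadditive, the logarithm of
`ω (st) / (ω s ω t)` is at most `ρ (τ s + τ t) - ρ (τ s) - ρ (τ t)`, which is therefore bounded by
the logarithm of `u` at whichever of `s`, `t` is shorter. -/

open Set

theorem ConcaveOn.map_add_map_le_of_add_eq {𝕜 : Type*} [Field 𝕜] [LinearOrder 𝕜]
    [IsStrictOrderedRing 𝕜] {s : Set 𝕜} {f : 𝕜 → 𝕜} (hf : ConcaveOn 𝕜 s f) {x y z w : 𝕜}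
    (hx : x ∈ s) (hw : w ∈ s) (hxy : x ≤ y) (hyw : y ≤ w) (hxz : x ≤ z) (hzw : z ≤ w)
    (hsum : y + z = x + w) : f x + f w ≤ f y + f z := by
  rcases (hxy.trans hyw).eq_or_lt with rfl | hxw
  · rw [le_antisymm hyw hxy, le_antisymm hzw hxz]
  have hpos : 0 < w - x := sub_pos.2 hxw
  have interpolate : ∀ p, x ≤ p → p ≤ w → (w - p) * f x + (p - x) * f w ≤ (w - x) * f p := by
    intro p hxp hpw
    have h := hf.2 hx hw (div_nonneg (sub_nonneg.2 hpw) hpos.le)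
      (div_nonneg (sub_nonneg.2 hxp) hpos.le) (by field)
    rw [show ((w - p) / (w - x)) • x + ((p - x) / (w - x)) • w = p by simp only [smul_eq_mul]; field,
      smul_eq_mul, smul_eq_mul, div_mul_eq_mul_div, div_mul_eq_mul_div, ← add_div,
      div_le_iff₀ hpos, mul_comm (f p)] at h
    exact h
  refine le_of_mul_le_mul_left ?_ hpos
  linear_combination interpolate y hxy hyw + interpolate z hxz hzw + (f x - f w) * hsum

theorem ConcaveOn.map_add_sub_le {ρ : ℝ → ℝ} (hρ : ConcaveOn ℝ (Ici 0) ρ) {a b : ℝ}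
    (ha : 0 ≤ a) (hab : a ≤ b) : ρ (a + b) - ρ a - ρ b ≤ ρ (2 * a) - 2 * ρ a := by
  have := hρ.map_add_map_le_of_add_eq (x := a) (y := 2 * a) (z := b) (w := a + b) ha
    (by simp only [mem_Ici]; linarith) (by linarith) (by linarith) hab (by linarith) (by ring)
  linarith

theorem ConcaveOn.exp_map_add_sub_le {ρ : ℝ → ℝ} (hρ : ConcaveOn ℝ (Ici 0) ρ) {a b : ℝ}
    (ha : 0 ≤ a) (hb : 0 ≤ b) :
    Real.exp (ρ (a + b) - ρ a - ρ b) ≤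
      Real.exp (ρ (2 * a) - 2 * ρ a) + Real.exp (ρ (2 * b) - 2 * ρ b) := by
  wlog hab : a ≤ b generalizing a b
  · rw [add_comm a, sub_right_comm, add_comm (Real.exp _)]
    exact this hb ha (le_of_not_ge hab)
  calc Real.exp (ρ (a + b) - ρ a - ρ b) ≤ Real.exp (ρ (2 * a) - 2 * ρ a) :=
        Real.exp_le_exp.2 (hρ.map_add_sub_le ha hab)
    _ ≤ _ := le_add_of_nonneg_right (Real.exp_nonneg _)

theorem stmt_4_general {G : Type*} [Group G] (τ : G → ℕ)
    (hτ_sub : ∀ s t : G, τ (s * t) ≤ τ s + τ t)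
    (ρ : ℝ → ℝ) (hconc : ConcaveOn ℝ (Set.Ici 0) ρ)
    (hmono : MonotoneOn ρ (Set.Ici 0))
    (ω u : G → ℝ)
    (hω : ∀ s, ω s = Real.exp (ρ (τ s)))
    (hu : ∀ s, u s = Real.exp (ρ (2 * (τ s : ℝ)) - 2 * ρ (τ s))) :
    ∀ s t : G, ω (s * t) / (ω s * ω t) ≤ u s + u t := by
  intro s t
  have hρ_sub : ρ (τ (s * t)) ≤ ρ (τ s + τ t) :=
    hmono (mem_Ici.2 (Nat.cast_nonneg _)) (mem_Ici.2 (by positivity))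
      (by exact_mod_cast hτ_sub s t)
  rw [hω, hω, hω, hu, hu, ← Real.exp_add, ← Real.exp_sub, ← sub_sub]
  calc Real.exp (ρ (τ (s * t)) - ρ (τ s) - ρ (τ t))
      ≤ Real.exp (ρ (τ s + τ t) - ρ (τ s) - ρ (τ t)) := by gcongr
    _ ≤ _ := hconc.exp_map_add_sub_le (Nat.cast_nonneg _) (Nat.cast_nonneg _)

theorem stmt_4 {G : Type*} [Group G] (τ : G → ℕ)
    (hτ_sub : ∀ s t : G, τ (s * t) ≤ τ s + τ t)
    (hτ_inv : ∀ s : G, τ s⁻¹ = τ s) (hτ_e : τ 1 = 0)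
    (ρ : ℝ → ℝ) (hconc : ConcaveOn ℝ (Set.Ici 0) ρ)
    (hmono : MonotoneOn ρ (Set.Ici 0)) (hnonneg : ∀ x ≥ (0:ℝ), 0 ≤ ρ x) (h0 : ρ 0 = 0)
    (ω u : G → ℝ)
    (hω : ∀ s, ω s = Real.exp (ρ (τ s)))
    (hu : ∀ s, u s = Real.exp (ρ (2 * (τ s : ℝ)) - 2 * ρ (τ s))) :
    ∀ s t : G, ω (s * t) / (ω s * ω t) ≤ u s + u t :=
  stmt_4_general τ hτ_sub ρ hconc hmono ω u hω hu
end

section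
/- There exists a function ρ : [0,∞) → [0,∞) such that: (i) ρ(0) = 0 and ρ is increasing; (ii) ρ is concave; (iii) lim_{x→∞} ρ(x)/x = 0; (iv) ∑_{n=1}^∞ e^{-ρ(n)} converges; and (v) ∑_{n=1}^∞ e^{ρ(2n) - 2ρ(n)} diverges. -/
/-!
Take `ρ` to be the lower envelope of the lines `x ↦ 4 log cₖ + x / cₖ`, where `c₀ = 1` and
`cₖ₊₁ = exp (cₖ ^ 8)`. As an infimum of nondecreasing affine maps with nonnegative values on
`[0, ∞)` it is concave and nondecreasing there, and the slopes `1 / cₖ → 0` make it sublinear.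
Every line dominates `2 log x`, so `e^{-ρ(n)} ≤ n⁻²`.

For `m ≤ cₖ ^ 9` the lines with index `j > k` have intercept `4 log cⱼ ≥ 4 cₖ ^ 8 ≥ 2m / cₖ`,
hence `ρ(2m) ≥ 2m / cₖ`, while `2ρ(m) ≤ 8 log cₖ + 2m / cₖ`. So the first `⌊cₖ ^ 9⌋` terms
of `∑ e^{ρ(2n) - 2ρ(n)}` are all at least `cₖ⁻⁸`, and together they exceed `cₖ - 1`.
-/

open Real Filter Topology Finset

noncomputable def lowerEnvelope (a b : ℕ → ℝ) (x : ℝ) : ℝ := ⨅ k, (a k + b k * x)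

section LowerEnvelope

variable {a b : ℕ → ℝ} {x y : ℝ}

theorem le_lowerEnvelope (h : ∀ k, y ≤ a k + b k * x) : y ≤ lowerEnvelope a b x :=
  le_ciInf h

variable (ha : ∀ k, 0 ≤ a k) (hb : ∀ k, 0 ≤ b k)
include ha hb

theorem lowerEnvelope_le (k : ℕ) (hx : 0 ≤ x) : lowerEnvelope a b x ≤ a k + b k * x :=
  ciInf_le ⟨0, by rintro _ ⟨j, rfl⟩; exact add_nonneg (ha j) (mul_nonneg (hb j) hx)⟩ k

theorem lowerEnvelope_nonneg (hx : 0 ≤ x) : 0 ≤ lowerEnvelope a b x :=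
  le_lowerEnvelope fun k => add_nonneg (ha k) (mul_nonneg (hb k) hx)

theorem lowerEnvelope_zero {k : ℕ} (hk : a k = 0) : lowerEnvelope a b 0 = 0 :=
  le_antisymm (by simpa [hk] using lowerEnvelope_le ha hb k le_rfl)
    (lowerEnvelope_nonneg ha hb le_rfl)

theorem monotoneOn_lowerEnvelope : MonotoneOn (lowerEnvelope a b) (Set.Ici 0) :=
  fun x hx _ _ hxy => le_lowerEnvelope fun k =>
    (lowerEnvelope_le ha hb k hx).trans (by gcongr; exact hb k)

theorem concaveOn_lowerEnvelope : ConcaveOn ℝ (Set.Ici 0) (lowerEnvelope a b) := by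
  refine ⟨convex_Ici 0, fun x hx y hy s t hs ht hst => le_lowerEnvelope fun k => ?_⟩
  calc s • lowerEnvelope a b x + t • lowerEnvelope a b y
      ≤ s * (a k + b k * x) + t * (a k + b k * y) := by
        simp only [smul_eq_mul]
        gcongr
        exacts [lowerEnvelope_le ha hb k hx, lowerEnvelope_le ha hb k hy]
    _ = a k + b k * (s • x + t • y) := by
        simp only [smul_eq_mul]
        linear_combination a k * hst

theorem tendsto_lowerEnvelope_div_atTop (hb₀ : Tendsto b atTop (𝓝 0)) :
    Tendsto (fun x => lowerEnvelope a b x / x) atTop (𝓝 0) := by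
  refine tendsto_order.2 ⟨fun ε hε => ?_, fun ε hε => ?_⟩
  · filter_upwards [eventually_ge_atTop 0] with x hx
    exact hε.trans_le (div_nonneg (lowerEnvelope_nonneg ha hb hx) hx)
  · obtain ⟨k, hk⟩ := (hb₀.eventually (gt_mem_nhds (half_pos hε))).exists
    have hak : Tendsto (fun x => a k / x) atTop (𝓝 0) := tendsto_const_nhds.div_atTop tendsto_id
    filter_upwards [eventually_gt_atTop 0, hak.eventually (gt_mem_nhds (half_pos hε))]
      with x hx hax
    calc lowerEnvelope a b x / x ≤ (a k + b k * x) / x := by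
          gcongr; exact lowerEnvelope_le ha hb k hx.le
      _ = a k / x + b k := by field_simp
      _ < ε := by linarith

end LowerEnvelope

theorem two_mul_log_le_self {y : ℝ} (hy : 0 < y) : 2 * log y ≤ y := by
  have h := log_le_sub_one_of_pos (half_pos hy)
  rw [log_div hy.ne' two_ne_zero] at h
  linarith [log_two_lt_d9]

theorem summable_exp_neg_of_two_mul_log_le {f : ℝ → ℝ}
    (hf : ∀ x, 1 ≤ x → 2 * log x ≤ f x) :
    Summable fun n : ℕ => exp (-f (n + 1)) := by
  have hsum : Summable fun n : ℕ => (((n : ℝ) + 1) ^ 2)⁻¹ := by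
    simpa using (summable_nat_add_iff 1).mpr (Real.summable_nat_pow_inv.mpr one_lt_two)
  refine hsum.of_nonneg_of_le (fun n => (exp_pos _).le) fun n => ?_
  have hn : (1 : ℝ) ≤ n + 1 := by simp
  calc exp (-f (n + 1)) ≤ exp (-log (((n : ℝ) + 1) ^ 2)) := by
        rw [log_pow, Nat.cast_ofNat, exp_le_exp, neg_le_neg_iff]
        exact hf _ hn
    _ = (((n : ℝ) + 1) ^ 2)⁻¹ := by rw [exp_neg, exp_log (by positivity)]

theorem not_summable_of_forall_le_sum_range {f : ℕ → ℝ} (hf : ∀ n, 0 ≤ f n)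
    (h : ∀ B, ∃ N, B ≤ ∑ n ∈ range N, f n) : ¬Summable f := fun hs => by
  obtain ⟨N, hN⟩ := h (∑' n, f n + 1)
  linarith [hs.sum_le_tsum (range N) fun n _ => hf n]

noncomputable def scale : ℕ → ℝ
  | 0 => 1
  | k + 1 => exp (scale k ^ 8)

theorem one_le_scale : ∀ k, 1 ≤ scale k
  | 0 => le_rfl
  | _ + 1 => one_le_exp (by positivity)

theorem scale_pos (k : ℕ) : 0 < scale k := one_pos.trans_le (one_le_scale k)

theorem log_scale_succ (k : ℕ) : log (scale (k + 1)) = scale k ^ 8 := log_exp _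

theorem scale_add_one_le_scale_succ (k : ℕ) : scale k + 1 ≤ scale (k + 1) :=
  calc scale k + 1 ≤ scale k ^ 8 + 1 := by
        gcongr; exact le_self_pow₀ (one_le_scale k) (by norm_num)
    _ ≤ scale (k + 1) := add_one_le_exp _

theorem monotone_scale : Monotone scale :=
  monotone_nat_of_le_succ fun k => by linarith [scale_add_one_le_scale_succ k]

theorem natCast_le_scale : ∀ k : ℕ, (k : ℝ) ≤ scale k
  | 0 => by simp [scale]
  | k + 1 => by push_cast; linarith [natCast_le_scale k, scale_add_one_le_scale_succ k]

theorem tendsto_inv_scale : Tendsto (fun k => (scale k)⁻¹) atTop (𝓝 0) :=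
  tendsto_inv_atTop_zero.comp (tendsto_atTop_mono natCast_le_scale tendsto_natCast_atTop_atTop)

noncomputable def rho : ℝ → ℝ :=
  lowerEnvelope (fun k => 4 * log (scale k)) (fun k => (scale k)⁻¹)

theorem four_mul_log_scale_nonneg (k : ℕ) : 0 ≤ 4 * log (scale k) :=
  mul_nonneg (by norm_num) (log_nonneg (one_le_scale k))

theorem inv_scale_nonneg (k : ℕ) : 0 ≤ (scale k)⁻¹ := inv_nonneg.2 (scale_pos k).le

theorem rho_le (k : ℕ) {x : ℝ} (hx : 0 ≤ x) :
    rho x ≤ 4 * log (scale k) + (scale k)⁻¹ * x :=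
  lowerEnvelope_le four_mul_log_scale_nonneg inv_scale_nonneg k hx

theorem two_mul_log_le_rho {x : ℝ} (hx : 1 ≤ x) : 2 * log x ≤ rho x :=
  le_lowerEnvelope fun k => by
    have hx₀ : 0 < x := one_pos.trans_le hx
    have h := two_mul_log_le_self (div_pos hx₀ (scale_pos k))
    rw [log_div hx₀.ne' (scale_pos k).ne', ← inv_mul_eq_div] at h
    linarith [log_nonneg (one_le_scale k)]

theorem two_mul_inv_scale_mul_le_rho (k : ℕ) {m : ℝ} (hm : 0 ≤ m) (hmk : m ≤ scale k ^ 9) :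
    2 * ((scale k)⁻¹ * m) ≤ rho (2 * m) := by
  refine le_lowerEnvelope fun j => ?_
  rcases le_or_gt j k with hjk | hkj
  · have h : (scale k)⁻¹ ≤ (scale j)⁻¹ := inv_anti₀ (scale_pos j) (monotone_scale hjk)
    nlinarith [four_mul_log_scale_nonneg j]
  · have hlog : scale k ^ 8 ≤ log (scale j) :=
      log_scale_succ k ▸ log_le_log (scale_pos _) (monotone_scale hkj)
    have hslope : (scale k)⁻¹ * m ≤ scale k ^ 8 := by
      rw [inv_mul_le_iff₀ (scale_pos k)]
      linarith
    have : 0 ≤ (scale j)⁻¹ * (2 * m) := mul_nonneg (inv_scale_nonneg j) (by linarith)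
    linarith [pow_nonneg (scale_pos k).le 8]

theorem inv_scale_pow_le_exp_rho (k : ℕ) {m : ℝ} (hm : 0 ≤ m) (hmk : m ≤ scale k ^ 9) :
    (scale k ^ 8)⁻¹ ≤ exp (rho (2 * m) - 2 * rho m) := by
  have h : -log (scale k ^ 8) ≤ rho (2 * m) - 2 * rho m := by
    rw [log_pow, Nat.cast_ofNat]
    linarith [rho_le k hm, two_mul_inv_scale_mul_le_rho k hm hmk]
  rwa [← exp_le_exp, exp_neg, exp_log (pow_pos (scale_pos k) 8)] at h

theorem scale_sub_one_le_sum_exp_rho (k : ℕ) :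
    scale k - 1 ≤ ∑ n ∈ range ⌊scale k ^ 9⌋₊,
      exp (rho (2 * ((n : ℝ) + 1)) - 2 * rho ((n : ℝ) + 1)) := by
  set N := ⌊scale k ^ 9⌋₊
  have hterm : ∀ n ∈ range N,
      (scale k ^ 8)⁻¹ ≤ exp (rho (2 * ((n : ℝ) + 1)) - 2 * rho (n + 1)) :=
    fun n hn => inv_scale_pow_le_exp_rho k (by positivity) <| by
      have : ((n + 1 : ℕ) : ℝ) ≤ N := by exact_mod_cast mem_range.1 hn
      push_cast at this
      linarith [Nat.floor_le (pow_nonneg (scale_pos k).le 9)]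
  have hN : scale k - 1 ≤ N * (scale k ^ 8)⁻¹ := by
    have h8 : 1 ≤ scale k ^ 8 := one_le_pow₀ (one_le_scale k)
    rw [← div_eq_mul_inv, le_div_iff₀ (by positivity)]
    nlinarith [Nat.sub_one_lt_floor (scale k ^ 9)]
  have hsum := card_nsmul_le_sum _ _ _ hterm
  rw [card_range, nsmul_eq_mul] at hsum
  exact hN.trans hsum

theorem stmt_14 :
    ∃ ρ : ℝ → ℝ,
      (ρ 0 = 0 ∧ MonotoneOn ρ (Set.Ici 0) ∧ ∀ x ≥ (0:ℝ), 0 ≤ ρ x) ∧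
      ConcaveOn ℝ (Set.Ici 0) ρ ∧
      Filter.Tendsto (fun x => ρ x / x) Filter.atTop (nhds 0) ∧
      Summable (fun n : ℕ => Real.exp (-ρ (n + 1))) ∧
      ¬ Summable (fun n : ℕ => Real.exp (ρ (2 * ((n : ℝ) + 1)) - 2 * ρ ((n : ℝ) + 1))) := by
  have ha := four_mul_log_scale_nonneg
  have hb := inv_scale_nonneg
  refine ⟨rho, ⟨lowerEnvelope_zero ha hb (k := 0) (by simp [scale]),
    monotoneOn_lowerEnvelope ha hb, fun x hx => lowerEnvelope_nonneg ha hb hx⟩,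
    concaveOn_lowerEnvelope ha hb,
    tendsto_lowerEnvelope_div_atTop ha hb tendsto_inv_scale,
    summable_exp_neg_of_two_mul_log_le fun x hx => two_mul_log_le_rho hx,
    not_summable_of_forall_le_sum_range (fun n => (exp_pos _).le) fun B => ?_⟩
  obtain ⟨k, hk⟩ := exists_nat_ge (B + 1)
  exact ⟨_, by linarith [natCast_le_scale k, scale_sub_one_le_sum_exp_rho k]⟩
end
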